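/- Let b ≥ 2 and k ≥ 1 be integers and let a = k·b. Then for every real m×n matrix A, herdisc(A, b) ≤ k · herdisc(A, a). -/

import Mathlib

open Finset

/-- `c`-color discrepancy of a matrix: minimum over `c`-colorings `p` of the columns of the
maximum over colors `d` and rows `i` of `|∑_{j : p j = d} A i j - (1/c) ∑_j A i j|`. -/
noncomputable def mdisc {ι κ : Type*} [Fintype ι] [Fintype κ] (A : ι → κ → ℝ) (c : ℕ) : ℝ :=
  ⨅ p : κ → Fin c, ⨆ d : Fin c, ⨆ i : ι,
    |∑ j ∈ Finset.univ.filter (fun j => p j = d), A i j - (1 / (c : ℝ)) * ∑ j, A i j|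

/-- hereditary `c`-color discrepancy: maximum of `mdisc` over all nonempty column submatrices. -/
noncomputable def mherdisc {ι : Type*} [Fintype ι] {n : ℕ} (A : ι → Fin n → ℝ) (c : ℕ) : ℝ :=
  ⨆ J : {J : Finset (Fin n) // J.Nonempty}, mdisc (fun i (j : {x // x ∈ J.1}) => A i j.1) c

/-! Take an optimal `k * b`-coloring and merge its colors into `b` classes of `k` colors each.
Since `1 / b = k * (1 / (k * b))`, the deviation of a merged class on a row is the sum of the `k`
deviations of its member colors, hence at most `k` times the discrepancy of the finer coloring.
Applying this to every column submatrix gives the hereditary bound. -/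

section Coloring

variable {ι κ : Type*} [Fintype κ] (A : ι → κ → ℝ) {c k b : ℕ}

noncomputable def colorDeviation (p : κ → Fin c) (d : Fin c) (i : ι) : ℝ :=
  ∑ j ∈ univ.filter (fun j => p j = d), A i j - (1 / (c : ℝ)) * ∑ j, A i j

noncomputable def coloringDisc (p : κ → Fin c) : ℝ :=
  ⨆ d : Fin c, ⨆ i : ι, |colorDeviation A p d i|

theorem coloringDisc_nonneg (p : κ → Fin c) : 0 ≤ coloringDisc A p :=
  Real.iSup_nonneg fun _ => Real.iSup_nonneg fun _ => abs_nonneg _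

theorem colorDeviation_modNat [NeZero k] (p : κ → Fin (k * b)) (d : Fin b) (i : ι) :
    colorDeviation A (fun j => (p j).modNat) d i =
      ∑ t : Fin k, colorDeviation A p (finProdFinEquiv (t, d)) i := by
  have hb : (b : ℝ) ≠ 0 := Nat.cast_ne_zero.mpr (Fin.pos d).ne'
  have hk : (k : ℝ) ≠ 0 := Nat.cast_ne_zero.mpr (NeZero.ne k)
  have hsplit : ∑ j ∈ univ.filter (fun j => (p j).modNat = d), A i j =
      ∑ t : Fin k, ∑ j ∈ univ.filter (fun j => p j = finProdFinEquiv (t, d)), A i j := by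
    rw [← sum_fiberwise_of_maps_to (g := fun j => (p j).divNat) (t := univ)
      (fun _ _ => mem_univ _)]
    refine sum_congr rfl fun t _ => sum_congr ?_ fun _ _ => rfl
    rw [filter_filter]
    refine filter_congr fun j _ => ?_
    rw [← Equiv.symm_apply_eq, finProdFinEquiv_symm_apply, Prod.ext_iff, and_comm]
  simp only [colorDeviation, hsplit, sum_sub_distrib, sum_const, card_univ, Fintype.card_fin,
    nsmul_eq_mul, Nat.cast_mul]
  field_simp

section Finite

variable [Finite ι]

theorem abs_colorDeviation_le_coloringDisc (p : κ → Fin c) (d : Fin c) (i : ι) :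
    |colorDeviation A p d i| ≤ coloringDisc A p :=
  (le_ciSup (Finite.bddAbove_range (|colorDeviation A p d ·|)) i).trans
    (le_ciSup (Finite.bddAbove_range (fun d => ⨆ i, |colorDeviation A p d i|)) d)

theorem coloringDisc_modNat_le [NeZero k] (p : κ → Fin (k * b)) :
    coloringDisc A (fun j => (p j).modNat) ≤ k * coloringDisc A p := by
  have hbound : 0 ≤ k * coloringDisc A p := mul_nonneg k.cast_nonneg (coloringDisc_nonneg A p)
  refine Real.iSup_le (fun d => Real.iSup_le (fun i => ?_) hbound) hbound
  calc |colorDeviation A (fun j => (p j).modNat) d i|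
      = |∑ t : Fin k, colorDeviation A p (finProdFinEquiv (t, d)) i| := by
        rw [colorDeviation_modNat]
    _ ≤ ∑ t : Fin k, |colorDeviation A p (finProdFinEquiv (t, d)) i| := abs_sum_le_sum_abs _ _
    _ ≤ ∑ _t : Fin k, coloringDisc A p :=
        sum_le_sum fun t _ => abs_colorDeviation_le_coloringDisc A p _ i
    _ = k * coloringDisc A p := by simp

end Finite

variable [Fintype ι]

theorem mdisc_eq_iInf_coloringDisc (c : ℕ) : mdisc A c = ⨅ p : κ → Fin c, coloringDisc A p :=
  rfl

theorem mdisc_nonneg (c : ℕ) : 0 ≤ mdisc A c :=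
  Real.iInf_nonneg fun p => coloringDisc_nonneg A p

theorem mdisc_le_coloringDisc (p : κ → Fin c) : mdisc A c ≤ coloringDisc A p :=
  ciInf_le (Finite.bddBelow_range _) p

theorem mdisc_le_mul_mdisc_mul (hk : k ≠ 0) (hb : b ≠ 0) :
    mdisc A b ≤ k * mdisc A (k * b) := by
  have : NeZero k := ⟨hk⟩
  have : NeZero (k * b) := ⟨mul_ne_zero hk hb⟩
  obtain ⟨p, hp⟩ := exists_eq_ciInf_of_finite (f := coloringDisc A (c := k * b))
  calc mdisc A b ≤ coloringDisc A (fun j => (p j).modNat) := mdisc_le_coloringDisc A _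
    _ ≤ k * coloringDisc A p := coloringDisc_modNat_le A p
    _ = k * mdisc A (k * b) := by rw [hp, mdisc_eq_iInf_coloringDisc]

end Coloring

theorem mherdisc_nonneg {ι : Type*} [Fintype ι] {n : ℕ} (A : ι → Fin n → ℝ) (c : ℕ) :
    0 ≤ mherdisc A c :=
  Real.iSup_nonneg fun _ => mdisc_nonneg _ c

theorem mdisc_le_mherdisc {ι : Type*} [Fintype ι] {n : ℕ} (A : ι → Fin n → ℝ) (c : ℕ)
    (J : {J : Finset (Fin n) // J.Nonempty}) :
    mdisc (fun i (j : {x // x ∈ J.1}) => A i j.1) c ≤ mherdisc A c :=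
  le_ciSup (Finite.bddAbove_range (fun J : {J : Finset (Fin n) // J.Nonempty} =>
    mdisc (fun i (j : {x // x ∈ J.1}) => A i j.1) c)) J

theorem herdisc_le_k_mul_herdisc_of_dvd_general {m n : ℕ}
    (A : Fin m → Fin n → ℝ) (b k a : ℕ) (hb : 2 ≤ b) (hk : 1 ≤ k) (ha : a = k * b) :
    mherdisc A b ≤ (k : ℝ) * mherdisc A a := by
  subst ha
  refine Real.iSup_le (fun J => ?_) (mul_nonneg k.cast_nonneg (mherdisc_nonneg A _))
  calc mdisc (fun i (j : {x // x ∈ J.1}) => A i j.1) b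
      ≤ k * mdisc (fun i (j : {x // x ∈ J.1}) => A i j.1) (k * b) :=
        mdisc_le_mul_mdisc_mul _ (by omega) (by omega)
    _ ≤ k * mherdisc A (k * b) := by gcongr; exact mdisc_le_mherdisc A _ J

/-- Let b ≥ 2 and k ≥ 1 be integers and a = k·b. Then for every real m×n matrix A,
herdisc(A, b) ≤ k · herdisc(A, a). -/
theorem herdisc_le_k_mul_herdisc_of_dvd {m n : ℕ} (hm : 0 < m) (hn : 0 < n)
    (A : Fin m → Fin n → ℝ) (b k a : ℕ) (hb : 2 ≤ b) (hk : 1 ≤ k) (ha : a = k * b) :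
    mherdisc A b ≤ (k : ℝ) * mherdisc A a :=
  herdisc_le_k_mul_herdisc_of_dvd_general A b k a hb hk ha
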